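/- (Theorem 1, finite-sample form.) Let M, L ≥ 1 and let ζ : Fin M → Fin L → ℝ be such that for each l ∈ Fin L the map m ↦ ζ m l is injective (no ties within each column). Define r(m,l) = card {m' ∈ Fin M | ζ m' l ≤ ζ m l}, rmax(m) = max_{l ∈ Fin L} r(m,l), and for 1 ≤ r ≤ M let ζ^{(l)}_{(r)} denote the r-th smallest element of the multiset {ζ m' l | m' ∈ Fin M}. Let α ∈ (0,1), set k = ⌈(1−α)·M⌉, and let r_{1−α} be the k-th smallest element of the multiset {rmax(m) | m ∈ Fin M}. Define U(l) = ζ^{(l)}_{(r_{1−α})} for each l ∈ Fin L. Then the simultaneous upper limits U(l) have empirical coverage at least 1−α: card {m ∈ Fin M | ∀ l ∈ Fin L, ζ m l ≤ U(l)} ≥ (1−α)·M. -/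

import Mathlib

/-!
If `rmax ζ m ≤ r` then `rank ζ m l ≤ r` in every column `l`, and a value whose rank is at most
`r` lies below the `r`-th order statistic of its column; so every draw whose max rank is at most
`r_{1-α}` is covered by all the upper limits `U l`. Being the `k`-th smallest max rank,
`r_{1-α}` bounds at least `k = ⌈(1-α)·M⌉ ≥ (1-α)·M` of the max ranks.
-/

/-- The rank of draw `m` in column `l`: the number of draws in column `l`
(including `ζ m l` itself) that are at most `ζ m l`. -/
noncomputable def rank {M L : ℕ} (ζ : Fin M → Fin L → ℝ) (m : Fin M) (l : Fin L) : ℕ :=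
  (Finset.univ.filter (fun m' => ζ m' l ≤ ζ m l)).card

/-- The maximal rank of draw `m` across all columns. -/
noncomputable def rmax {M L : ℕ} (ζ : Fin M → Fin L → ℝ) (m : Fin M) : ℕ :=
  Finset.univ.sup (fun l : Fin L => rank ζ m l)

/-- The `r`-th smallest element of the multiset of column-`l` values
`{ζ m' l | m' ∈ Fin M}` (for `1 ≤ r ≤ M`): the `(r-1)`-indexed entry of the
sorted list of values. -/
noncomputable def orderStat {M L : ℕ} (ζ : Fin M → Fin L → ℝ) (l : Fin L) (r : ℕ) : ℝ :=
  ((Finset.univ.val.map (fun m' => ζ m' l)).sort (· ≤ ·)).getD (r - 1) 0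

/-- The `k`-th smallest element of the multiset of values `{v m | m ∈ Fin M}`
(for `1 ≤ k ≤ M`): the `(k-1)`-indexed entry of the sorted list of values. -/
def kthSmallest {M : ℕ} (v : Fin M → ℕ) (k : ℕ) : ℕ :=
  ((Finset.univ.val.map v).sort (· ≤ ·)).getD (k - 1) 0

open Finset

namespace List

variable {α : Type*} [LinearOrder α] {l : List α}

theorem SortedLE.succ_le_countP_le_getElem (hl : l.SortedLE) {i : ℕ} (hi : i < l.length) :
    i + 1 ≤ l.countP (· ≤ l[i]) := by
  have hprefix : ∀ x ∈ l.take (i + 1), x ≤ l[i] := by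
    intro x hx
    obtain ⟨j, hj, rfl⟩ := mem_iff_getElem.mp hx
    rw [getElem_take]
    exact hl.getElem_le_getElem_of_le (by simp at hj; omega)
  have hsub := (take_sublist (i + 1) l).countP_le (p := (· ≤ l[i]))
  rw [countP_eq_length.mpr (by simpa using hprefix), length_take] at hsub
  omega

theorem SortedLE.le_getElem_of_countP_le (hl : l.SortedLE) {x : α} (hx : x ∈ l) {i : ℕ}
    (hi : i < l.length) (hcount : l.countP (· ≤ x) ≤ i + 1) : x ≤ l[i] := by
  obtain ⟨j, hj, rfl⟩ := mem_iff_getElem.mp hx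
  by_contra! hlt
  have hij : i < j := by
    by_contra! hji
    exact (hl.getElem_le_getElem_of_le hji).not_gt hlt
  have := hl.succ_le_countP_le_getElem hj
  omega

end List

theorem Finset.card_filter_le_eq_countP_sort {ι α : Type*} [Fintype ι] [LinearOrder α]
    (f : ι → α) (t : α) :
    #{i | f i ≤ t} = ((univ.val.map f).sort (· ≤ ·)).countP (· ≤ t) := by
  rw [← Multiset.coe_countP, Multiset.sort_eq, Multiset.countP_map]
  rfl

theorem Multiset.sortedLE_sort {α : Type*} [LinearOrder α] (s : Multiset α) :
    (s.sort (· ≤ ·)).SortedLE :=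
  (Multiset.pairwise_sort s _).sortedLE

section Ranks

variable {M L : ℕ} (ζ : Fin M → Fin L → ℝ)

theorem one_le_rank (m : Fin M) (l : Fin L) : 1 ≤ rank ζ m l :=
  card_pos.mpr ⟨m, by simp⟩

theorem rank_le_card_fin (m : Fin M) (l : Fin L) : rank ζ m l ≤ M :=
  (card_filter_le _ _).trans_eq (card_fin M)

theorem rank_le_rmax (m : Fin M) (l : Fin L) : rank ζ m l ≤ rmax ζ m :=
  le_sup (mem_univ l)

theorem rmax_le_card_fin (m : Fin M) : rmax ζ m ≤ M :=
  Finset.sup_le fun l _ => rank_le_card_fin ζ m l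

theorem le_orderStat_of_rank_le {m : Fin M} {l : Fin L} {r : ℕ} (hrank : rank ζ m l ≤ r)
    (hr : r ≤ M) : ζ m l ≤ orderStat ζ l r := by
  have hlen : ((univ.val.map (fun m' => ζ m' l)).sort (· ≤ ·)).length = M := by simp
  have hr1 := (one_le_rank ζ m l).trans hrank
  rw [orderStat, List.getD_eq_getElem _ _ (by omega)]
  refine (Multiset.sortedLE_sort _).le_getElem_of_countP_le (by simp) _ ?_
  rw [← card_filter_le_eq_countP_sort]
  exact hrank.trans_eq (by omega)

end Ranks

theorem kthSmallest_le {M : ℕ} {v : Fin M → ℕ} {B : ℕ} (hv : ∀ m, v m ≤ B) (k : ℕ) :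
    kthSmallest v k ≤ B := by
  unfold kthSmallest
  rcases lt_or_ge (k - 1) ((univ.val.map v).sort (· ≤ ·)).length with hk | hk
  · rw [List.getD_eq_getElem _ _ hk]
    obtain ⟨m, -, hm⟩ := Multiset.mem_map.mp ((Multiset.mem_sort _).mp (List.getElem_mem hk))
    exact hm ▸ hv m
  · rw [List.getD_eq_default _ _ hk]
    exact B.zero_le

theorem le_card_filter_le_kthSmallest {M : ℕ} (v : Fin M → ℕ) {k : ℕ} (hk : k ≤ M) :
    k ≤ #{m | v m ≤ kthSmallest v k} := by
  rcases Nat.eq_zero_or_pos k with rfl | hk0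
  · exact Nat.zero_le _
  have hlen : ((univ.val.map v).sort (· ≤ ·)).length = M := by simp
  rw [card_filter_le_eq_countP_sort, kthSmallest, List.getD_eq_getElem _ _ (by omega)]
  have := (Multiset.sortedLE_sort (univ.val.map v)).succ_le_countP_le_getElem
    (i := k - 1) (by omega)
  omega

theorem simultaneous_credible_coverage_general {M L : ℕ}
    (ζ : Fin M → Fin L → ℝ)
    (α : ℝ) (hα : α ∈ Set.Ioo (0 : ℝ) 1) :
    ((Finset.univ.filter (fun m : Fin M =>
        ∀ l : Fin L, ζ m l ≤ orderStat ζ l (kthSmallest (rmax ζ) ⌈(1 - α) * M⌉₊))).card : ℝ) ≥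
      (1 - α) * M := by
  set k := ⌈(1 - α) * M⌉₊
  set r := kthSmallest (rmax ζ) k
  have hkM : k ≤ M := Nat.ceil_le.mpr <|
    mul_le_of_le_one_left M.cast_nonneg (by linarith [hα.1])
  have hrM : r ≤ M := kthSmallest_le (rmax_le_card_fin ζ) k
  have hcover : #{m | rmax ζ m ≤ r} ≤ #{m | ∀ l, ζ m l ≤ orderStat ζ l r} := by
    refine card_le_card fun m hm => ?_
    simp only [mem_filter, mem_univ, true_and] at hm ⊢
    exact fun l => le_orderStat_of_rank_le ζ ((rank_le_rmax ζ m l).trans hm) hrM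
  calc (1 - α) * M ≤ k := Nat.le_ceil _
    _ ≤ #{m | rmax ζ m ≤ r} := by exact_mod_cast le_card_filter_le_kthSmallest _ hkM
    _ ≤ _ := by exact_mod_cast hcover

/-- Theorem 1 (finite-sample form): with `k = ⌈(1-α)·M⌉`, `r_{1-α}` the `k`-th
smallest of the max ranks `rmax(m)`, and `U(l) = ζ^{(l)}_{(r_{1-α})}`, the
simultaneous upper limits have empirical coverage at least `1 - α`:
`card {m | ∀ l, ζ m l ≤ U l} ≥ (1-α)·M`. -/
theorem simultaneous_credible_coverage {M L : ℕ} (hM : 1 ≤ M) (hL : 1 ≤ L)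
    (ζ : Fin M → Fin L → ℝ)
    (hζ : ∀ l : Fin L, Function.Injective (fun m => ζ m l))
    (α : ℝ) (hα : α ∈ Set.Ioo (0 : ℝ) 1) :
    ((Finset.univ.filter (fun m : Fin M =>
        ∀ l : Fin L, ζ m l ≤ orderStat ζ l (kthSmallest (rmax ζ) ⌈(1 - α) * M⌉₊))).card : ℝ) ≥
      (1 - α) * M :=
  simultaneous_credible_coverage_general ζ α hα
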